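/- Let n ≥ 7 and let T_{n,4} be the tournament on {1,…,n} with back edges n → 1, n → 2, n → 3 and n → 4. A weight matrix Λ = (λ_{ij}) is (1,2)-symplectic for T_{n,4} if and only if λ_{ij} = λ_{i(i+1)} + λ_{(i+1)(i+2)} + ⋯ + λ_{(j−1)j} for all pairs 1 ≤ i < j ≤ n except the pairs (1,n), (2,n), (3,n), (4,n), and λ_{2n} = λ_{12} + λ_{1n}, λ_{3n} = λ_{12} + λ_{23} + λ_{1n}, λ_{4n} = λ_{12} + λ_{23} + λ_{34} + λ_{1n} (with λ_{1n} an unconstrained positive parameter). -/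
import Mathlib


/-- In the tournament `T_{n,k}` on `{1,…,n}`, vertex `i` beats vertex `j`:
for `i < j` one has `i → j`, except that when `j = n` and `i ≤ k` instead `n → i`. -/
def Beats (n k i j : ℕ) : Prop :=
  (i < j ∧ ¬ (j = n ∧ i ≤ k)) ∨ (j < i ∧ i = n ∧ j ≤ k)

open Classical in
/-- The sign `ε_{ij}`: `1` if `i → j`, `-1` if `j → i`, `0` if `i = j`. -/
noncomputable def eps (n k i j : ℕ) : ℝ :=
  if Beats n k i j then 1 else if Beats n k j i then -1 else 0

/-- The coefficient `C_{ijl} = μ_{ij} - μ_{il} + μ_{jl}` where `μ_{ij} = ε_{ij} λ_{ij}`. -/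
noncomputable def Cco (n k : ℕ) (lam : ℕ → ℕ → ℝ) (i j l : ℕ) : ℝ :=
  eps n k i j * lam i j - eps n k i l * lam i l + eps n k j l * lam j l

/-- `lam` is a weight matrix on indices `1,…,n`: symmetric, zero diagonal,
positive off-diagonal entries. -/
def IsWeight (n : ℕ) (lam : ℕ → ℕ → ℝ) : Prop :=
  (∀ i j, lam i j = lam j i) ∧ (∀ i, lam i i = 0) ∧
  (∀ i j, 1 ≤ i → i ≤ n → 1 ≤ j → j ≤ n → i ≠ j → 0 < lam i j)

/-- `lam` is (1,2)-symplectic for `T_{n,k}`: `C_{ijl} = 0` for every triple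
`1 ≤ i < j < l ≤ n` which is not a 3-cycle of `T_{n,k}`, i.e. every triple
except those of the form `(i, j, n)` with `i ≤ k < j`. -/
def IsOneTwoSymplectic (n k : ℕ) (lam : ℕ → ℕ → ℝ) : Prop :=
  ∀ i j l, 1 ≤ i → i < j → j < l → l ≤ n →
    ¬ (l = n ∧ i ≤ k ∧ k < j) → Cco n k lam i j l = 0

lemma eps_one {n k i j : ℕ} (h : i < j) (h2 : ¬ (j = n ∧ i ≤ k)) : eps n k i j = 1 := by
  unfold eps
  rw [if_pos (show Beats n k i j from Or.inl ⟨h, h2⟩)]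

lemma eps_neg {n k i : ℕ} (h1 : i ≤ k) (h2 : i < n) : eps n k i n = -1 := by
  unfold eps
  rw [if_neg, if_pos (show Beats n k n i from Or.inr ⟨h2, rfl, h1⟩)]
  rintro (⟨_, hne⟩ | ⟨hlt, _, _⟩)
  · exact hne ⟨rfl, h1⟩
  · omega


/-- For `n ≥ 7`, a weight matrix `Λ` is (1,2)-symplectic for `T_{n,4}` (back edges
`n → 1`, `n → 2`, `n → 3`, `n → 4`) iff `λ_{ij} = λ_{i(i+1)} + ⋯ + λ_{(j-1)j}` for all
pairs `1 ≤ i < j ≤ n` except `(1,n)`, `(2,n)`, `(3,n)`, `(4,n)`, and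
`λ_{2n} = λ_{12} + λ_{1n}`, `λ_{3n} = λ_{12} + λ_{23} + λ_{1n}`,
`λ_{4n} = λ_{12} + λ_{23} + λ_{34} + λ_{1n}` (with `λ_{1n}` unconstrained). -/
theorem family_k_four (n : ℕ) (hn : 7 ≤ n)
    (lam : ℕ → ℕ → ℝ) (hΛ : IsWeight n lam) :
    IsOneTwoSymplectic n 4 lam ↔
      ((∀ i j, 1 ≤ i → i < j → j ≤ n → ¬ (j = n ∧ i ≤ 4) →
          lam i j = ∑ m ∈ Finset.Ico i j, lam m (m + 1)) ∧
       lam 2 n = lam 1 2 + lam 1 n ∧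
       lam 3 n = lam 1 2 + lam 2 3 + lam 1 n ∧
       lam 4 n = lam 1 2 + lam 2 3 + lam 3 4 + lam 1 n) := by
  constructor
  · intro H
    have key : ∀ j i, 1 ≤ i → i < j → j ≤ n → ¬ (j = n ∧ i ≤ 4) →
        lam i j = ∑ m ∈ Finset.Ico i j, lam m (m + 1) := by
      intro j
      induction j with
      | zero => intro i hi hij; omega
      | succ j ih =>
        intro i hi hij hjn hex
        rcases Nat.lt_or_ge i j with h | h
        · have hjltn : j < n := by omega
          have hC := H i j (j + 1) hi h (Nat.lt_succ_self j) hjn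
            (by rintro ⟨a, b, c⟩; exact hex ⟨a, b⟩)
          unfold Cco at hC
          rw [eps_one h (by rintro ⟨a, _⟩; omega),
              eps_one (by omega) (by rintro ⟨a, b⟩; exact hex ⟨a, b⟩),
              eps_one (Nat.lt_succ_self j)
                (by rintro ⟨a, b⟩; exact hex ⟨a, by omega⟩)] at hC
          have hij' := ih i hi h (by omega) (by rintro ⟨a, _⟩; omega)
          rw [Finset.sum_Ico_succ_top (by omega : i ≤ j)]
          linarith
        · have : i = j := by omega
          subst this
          rw [Finset.sum_Ico_succ_top (le_refl i), Finset.Ico_self,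
            Finset.sum_empty, zero_add]
    have hfst : ∀ i j, 1 ≤ i → i < j → j ≤ n → ¬ (j = n ∧ i ≤ 4) →
        lam i j = ∑ m ∈ Finset.Ico i j, lam m (m + 1) := fun i j a b c d => key j i a b c d
    -- back-edge relations
    have hrel : ∀ i j, 1 ≤ i → i < j → j ≤ 4 → lam j n = lam i j + lam i n := by
      intro i j hi hij hj4
      have hC := H i j n hi hij (by omega) le_rfl (by rintro ⟨_, _, c⟩; omega)
      unfold Cco at hC
      rw [eps_one hij (by rintro ⟨a, _⟩; omega),
          eps_neg (by omega : i ≤ 4) (by omega),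
          eps_neg (by omega : j ≤ 4) (by omega)] at hC
      linarith
    have h12 := hrel 1 2 (by norm_num) (by norm_num) (by norm_num)
    have h23 := hrel 2 3 (by norm_num) (by norm_num) (by norm_num)
    have h34 := hrel 3 4 (by norm_num) (by norm_num) (by norm_num)
    refine ⟨hfst, h12, by linarith, by linarith⟩
  · rintro ⟨hsum, h2, h3, h4⟩
    intro i j l hi hij hjl hl hnot
    unfold Cco
    rcases Nat.lt_or_ge l n with hln | hln
    · -- l < n : all forward edges
      rw [eps_one hij (by rintro ⟨a, _⟩; omega),
          eps_one (by omega) (by rintro ⟨a, _⟩; omega),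
          eps_one hjl (by rintro ⟨a, _⟩; omega)]
      rw [hsum i j hi hij (by omega) (by rintro ⟨a, _⟩; omega),
          hsum i l hi (by omega) (by omega) (by rintro ⟨a, _⟩; omega),
          hsum j l (by omega) hjl (by omega) (by rintro ⟨a, _⟩; omega)]
      rw [← Finset.sum_Ico_consecutive _ (by omega : i ≤ j) (by omega : j ≤ l)]
      ring
    · have hlen : l = n := by omega
      subst hlen
      rcases le_or_gt j 4 with hj4 | hj4
      · -- i < j ≤ 4 : two back edges
        rw [eps_one hij (by rintro ⟨a, _⟩; omega),
            eps_neg (by omega : i ≤ 4) (by omega),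
            eps_neg (by omega : j ≤ 4) (by omega)]
        have e12 : lam 1 2 = ∑ m ∈ Finset.Ico 1 2, lam m (m + 1) :=
          hsum 1 2 (by norm_num) (by norm_num) (by omega) (by rintro ⟨a, _⟩; omega)
        have e13 : lam 1 3 = ∑ m ∈ Finset.Ico 1 3, lam m (m + 1) :=
          hsum 1 3 (by norm_num) (by norm_num) (by omega) (by rintro ⟨a, _⟩; omega)
        have e14 : lam 1 4 = ∑ m ∈ Finset.Ico 1 4, lam m (m + 1) :=
          hsum 1 4 (by norm_num) (by norm_num) (by omega) (by rintro ⟨a, _⟩; omega)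
        have e23 : lam 2 3 = ∑ m ∈ Finset.Ico 2 3, lam m (m + 1) :=
          hsum 2 3 (by norm_num) (by norm_num) (by omega) (by rintro ⟨a, _⟩; omega)
        have e24 : lam 2 4 = ∑ m ∈ Finset.Ico 2 4, lam m (m + 1) :=
          hsum 2 4 (by norm_num) (by norm_num) (by omega) (by rintro ⟨a, _⟩; omega)
        have e34 : lam 3 4 = ∑ m ∈ Finset.Ico 3 4, lam m (m + 1) :=
          hsum 3 4 (by norm_num) (by norm_num) (by omega) (by rintro ⟨a, _⟩; omega)
        simp only [show Finset.Ico 1 2 = {1} by decide,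
          show Finset.Ico 1 3 = {1, 2} by decide,
          show Finset.Ico 1 4 = {1, 2, 3} by decide,
          show Finset.Ico 2 3 = {2} by decide,
          show Finset.Ico 2 4 = {2, 3} by decide,
          show Finset.Ico 3 4 = {3} by decide,
          Finset.sum_insert, Finset.mem_insert, Finset.sum_singleton] at e12 e13 e14 e23 e24 e34
        norm_num at e13 e14 e24
        have hi3 : i ≤ 3 := by omega
        interval_cases i <;> interval_cases j <;> linarith
      · -- j > 4 so by hnot, i > 4 : all forward
        have hi4 : 4 < i := by
          by_contra h
          exact hnot ⟨rfl, by omega, hj4⟩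
        rw [eps_one hij (by rintro ⟨a, _⟩; omega),
            eps_one (by omega) (by rintro ⟨_, a⟩; omega),
            eps_one hjl (by rintro ⟨_, a⟩; omega)]
        rw [hsum i j hi hij (by omega) (by rintro ⟨a, _⟩; omega),
            hsum i l hi (by omega) le_rfl (by rintro ⟨_, a⟩; omega),
            hsum j l (by omega) hjl le_rfl (by rintro ⟨_, a⟩; omega)]
        rw [← Finset.sum_Ico_consecutive _ (by omega : i ≤ j) (by omega : j ≤ l)]
        ring
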